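/- Composition of correlation constraints (Theorem 1): if Hermitian operators A ∈ L_A and B ∈ L_B have correlation types contained in sets A and B of binary strings respectively, then the composed operator A * B := (1/d_{S*}) Tr_{S*}[A^{T_{S*}} B] lies in L_{A*B}, where A*B := {a + b : a ∈ A, b ∈ B, (a+b) restricted to the composed systems S* is the all-zero string}. Equivalently, L_A * L_B ⊆ L_{A*B} for S* ⊇ S_A ∩ S_B. -/

import Mathlib

open Matrix BigOperators ComplexOrder

variable {ι : Type} [Fintype ι] [DecidableEq ι]

/-- Joint index of the multipartite Hilbert space `⊗_s ℂ^{d s}`. -/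
abbrev JIdx (d : ι → ℕ) := ∀ s, Fin (d s)

/-- Operators on the multipartite Hilbert space. -/
abbrev MOp (d : ι → ℕ) := Matrix (JIdx d) (JIdx d) ℂ

/-- Override the coordinates of `x` inside `S` by `z`. -/
def override (d : ι → ℕ) (S : Finset ι) (x : JIdx d) (z : ∀ s : S, Fin (d s)) : JIdx d :=
  fun s => if h : s ∈ S then z ⟨s, h⟩ else x s

/-- Partial transpose on the systems in `S` (in the standard basis). -/
def ptranspose (d : ι → ℕ) (S : Finset ι) (A : MOp d) : MOp d :=
  fun x y => A (fun s => if s ∈ S then y s else x s) (fun s => if s ∈ S then x s else y s)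

/-- The link product `A * B = (1/d_{S}) Tr_S[A^{T_S} B]` composing on the systems `S`,
with the result extended by the identity on `S` (systems are never discarded here). -/
noncomputable def link (d : ι → ℕ) (S : Finset ι) (A B : MOp d) : MOp d :=
  fun x y =>
    (if ∀ s ∈ S, x s = y s then (1 : ℂ) else 0) * (∏ s ∈ S, (d s : ℂ))⁻¹ *
      ∑ z : ∀ s : S, Fin (d s),
        (ptranspose d S A * B) (override d S x z) (override d S y z)

/-- Pure tensor-product operator from single-system operators. -/
def pureTensor (d : ι → ℕ) (M : ∀ s, Matrix (Fin (d s)) (Fin (d s)) ℂ) : MOp d :=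
  fun x y => ∏ s, M s (x s) (y s)

/-- The type subspace `L_a` of a binary string `a`: the real span of pure tensors
whose factor on system `s` is traceless Hermitian if `a s = 1` and a real multiple
of the identity if `a s = 0`. -/
noncomputable def Lstr (d : ι → ℕ) (a : ι → Bool) : Submodule ℝ (MOp d) :=
  Submodule.span ℝ
    { T | ∃ M : ∀ s, Matrix (Fin (d s)) (Fin (d s)) ℂ,
        (∀ s, if a s then (M s).IsHermitian ∧ (M s).trace = 0
              else ∃ r : ℝ, M s = (r : ℂ) • 1) ∧
        T = pureTensor d M }

/-- Correlation type elements: binary strings over the systems (`some a`)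
together with the special element `û` (`none`). -/
abbrev CTElem (ι : Type) := Option (ι → Bool)

/-- The set of operators of a single correlation type element: `L_û = {0, Id}`
(the only `u`-type term allowed is the fixed term `Id`), `L_{some a} = L_a`. -/
def Lel (d : ι → ℕ) : CTElem ι → Set (MOp d)
  | none => {0, 1}
  | some a => (Lstr d a : Set (MOp d))

/-- `L_A`: operators whose correlation type expansion only has components of
types belonging to `A`. -/
def LA (d : ι → ℕ) (A : Set (CTElem ι)) : Set (MOp d) :=
  { M | ∃ f : CTElem ι → MOp d,
      (∀ t, f t ∈ Lel d t) ∧ (∀ t ∉ A, f t = 0) ∧ M = ∑ t, f t }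

/-- `𝒞_A`: the positive semidefinite operators obeying the constraint `A`. -/
def CA (d : ι → ℕ) (A : Set (CTElem ι)) : Set (MOp d) :=
  { M | M ∈ LA d A ∧ M.PosSemidef }

/-- Addition of correlation type elements: XOR on strings, `û` a two-sided unit. -/
def ctadd : CTElem ι → CTElem ι → CTElem ι
  | none, b => b
  | some a, none => some a
  | some a, some b => some (fun s => xor (a s) (b s))

/-- The restriction of a type element to the systems `S` is trivial (`u` or `û`). -/
def restrTrivial (S : Finset ι) : CTElem ι → Prop
  | none => True
  | some c => ∀ s ∈ S, c s = false

/-- Composition of correlation constraints on the systems `S`: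
`A * B = {a + b : a ∈ A, b ∈ B, (a+b)|_S ∈ {u, û}}`. -/
def ctstar (S : Finset ι) (A B : Set (CTElem ι)) : Set (CTElem ι) :=
  { c | ∃ a ∈ A, ∃ b ∈ B, restrTrivial S (ctadd a b) ∧ c = ctadd a b }

/-- Support of a correlation type element. -/
def suppT : CTElem ι → Set ι
  | none => ∅
  | some a => { s | a s = true }

/-- Support of a set of correlation type elements. -/
def suppSet (A : Set (CTElem ι)) : Set ι := ⋃ t ∈ A, suppT t

/-- `A → B := {c : A * c ⊆ B}` (composition on the systems `S`). -/
def ctarrow (S : Finset ι) (A B : Set (CTElem ι)) : Set (CTElem ι) :=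
  { c | ctstar S A {c} ⊆ B }

/-! Both operators are real combinations of pure tensors whose factor on each system is either
traceless Hermitian (type 1) or a real multiple of the identity (type 0), and the link product is
bilinear, so it suffices to compose two pure tensors. This factorises system by system. On a
composed system `s` the factor becomes `(1/dₛ) Tr[Mₛᵀ Nₛ] • 1`: it vanishes when the two types
differ, because one factor is then traceless and the other scalar, and it is real because `Mₛᵀ`
and `Nₛ` are Hermitian. On any other system the factor is `Mₛ Nₛ`, which has type `aₛ + bₛ`
because `S ⊇ S_A ∩ S_B` rules out `aₛ = bₛ = 1` there. -/

namespace Matrix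

variable {n : Type*} [Fintype n]

lemma IsHermitian.conj_trace_mul {A B : Matrix n n ℂ} (hA : A.IsHermitian) (hB : B.IsHermitian) :
    starRingEnd ℂ (A * B).trace = (A * B).trace := by
  rw [starRingEnd_apply, ← trace_conjTranspose, conjTranspose_mul, hA.eq, hB.eq, trace_mul_comm]

end Matrix

lemma exists_prod_trace_transpose_mul_eq_ofReal {κ : Type*} {n : κ → Type*}
    [∀ s, Fintype (n s)] (T : Finset κ) (w : κ → ℝ) {M N : ∀ s, Matrix (n s) (n s) ℂ}
    (hM : ∀ s, (M s).IsHermitian) (hN : ∀ s, (N s).IsHermitian) :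
    ∃ r : ℝ, ∏ s ∈ T, ((w s : ℂ) * ((M s)ᵀ * N s).trace) = r := by
  refine Complex.conj_eq_iff_real.1 ?_
  rw [map_prod]
  refine Finset.prod_congr rfl fun s _ => ?_
  rw [map_mul, Complex.conj_ofReal, (hM s).transpose.conj_trace_mul (hN s)]

lemma Submodule.apply_mem_of_mem_span₂ {R M N P : Type*} [CommSemiring R] [AddCommMonoid M]
    [AddCommMonoid N] [AddCommMonoid P] [Module R M] [Module R N] [Module R P]
    (f : M →ₗ[R] N →ₗ[R] P) {s : Set M} {t : Set N} {p : Submodule R P}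
    (h : ∀ m ∈ s, ∀ n ∈ t, f m n ∈ p) {m : M} {n : N} (hm : m ∈ span R s) (hn : n ∈ span R t) :
    f m n ∈ p := by
  have hmap := apply_mem_map₂ f hm hn
  rw [map₂_span_span] at hmap
  exact span_le.2 (Set.image2_subset_iff.2 h) hmap

def IsFactorOfType {n : Type*} [Fintype n] [DecidableEq n] (b : Bool) (M : Matrix n n ℂ) :
    Prop :=
  if b then M.IsHermitian ∧ M.trace = 0 else ∃ r : ℝ, M = (r : ℂ) • 1

namespace IsFactorOfType

variable {n : Type*} [Fintype n] [DecidableEq n] {a b : Bool} {M N : Matrix n n ℂ}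

lemma one : IsFactorOfType false (1 : Matrix n n ℂ) := ⟨1, by simp⟩

lemma isHermitian (hM : IsFactorOfType b M) : M.IsHermitian := by
  cases b with
  | false =>
    obtain ⟨r, rfl⟩ := hM
    simp [IsHermitian, conjTranspose_smul]
  | true => exact hM.1

lemma real_smul {r : ℝ} (hM : IsFactorOfType b M) : IsFactorOfType b ((r : ℂ) • M) := by
  cases b with
  | false =>
    obtain ⟨r', rfl⟩ := hM
    exact ⟨r * r', by rw [smul_smul, Complex.ofReal_mul]⟩
  | true =>
    refine ⟨?_, by simp [trace_smul, hM.2]⟩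
    simp [IsHermitian, conjTranspose_smul, hM.1.eq]

lemma trace_transpose_mul_eq_zero (hM : IsFactorOfType a M) (hN : IsFactorOfType b N)
    (hab : a ≠ b) : (Mᵀ * N).trace = 0 := by
  cases a <;> cases b <;> simp only [ne_eq, not_true_eq_false] at hab
  · obtain ⟨r, rfl⟩ := hM
    simp [trace_smul, hN.2]
  · obtain ⟨r, rfl⟩ := hN
    simp [trace_smul, hM.2]

lemma mul (hM : IsFactorOfType a M) (hN : IsFactorOfType b N) (hab : ¬(a = true ∧ b = true)) :
    IsFactorOfType (xor a b) (M * N) := by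
  cases a with
  | false =>
    obtain ⟨r, rfl⟩ := hM
    simpa using hN.real_smul
  | true =>
    cases b with
    | false =>
      obtain ⟨r, rfl⟩ := hN
      simpa using hM.real_smul
    | true => exact absurd ⟨rfl, rfl⟩ hab

end IsFactorOfType

section LinkBilinear

variable (d : ι → ℕ) (S : Finset ι)

lemma link_add_left (A A' B : MOp d) :
    link d S (A + A') B = link d S A B + link d S A' B := by
  ext x y
  simp only [link, ptranspose, mul_apply, Matrix.add_apply, add_mul, Finset.sum_add_distrib]
  ring

lemma link_smul_left (c : ℂ) (A B : MOp d) :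
    link d S (c • A) B = c • link d S A B := by
  ext x y
  simp only [link, ptranspose, mul_apply, Matrix.smul_apply, smul_eq_mul, mul_assoc,
    ← Finset.mul_sum]
  ring

lemma link_add_right (A B B' : MOp d) :
    link d S A (B + B') = link d S A B + link d S A B' := by
  ext x y
  simp only [link, ptranspose, mul_apply, Matrix.add_apply, mul_add, Finset.sum_add_distrib]

lemma link_smul_right (c : ℂ) (A B : MOp d) :
    link d S A (c • B) = c • link d S A B := by
  ext x y
  simp only [link, ptranspose, mul_apply, Matrix.smul_apply, smul_eq_mul, mul_left_comm _ c,
    ← Finset.mul_sum]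

noncomputable def linkBilin : MOp d →ₗ[ℂ] MOp d →ₗ[ℂ] MOp d :=
  LinearMap.mk₂ ℂ (link d S) (link_add_left d S) (link_smul_left d S)
    (link_add_right d S) (link_smul_right d S)

lemma link_zero_left (B : MOp d) : link d S 0 B = 0 :=
  LinearMap.map_zero₂ (linkBilin d S) B

lemma link_zero_right (A : MOp d) : link d S A 0 = 0 :=
  (linkBilin d S A).map_zero

lemma link_sum_sum {κ κ' : Type*} [Fintype κ] [Fintype κ'] (F : κ → MOp d) (G : κ' → MOp d) :
    link d S (∑ i, F i) (∑ j, G j) = ∑ p : κ × κ', link d S (F p.1) (G p.2) := by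
  show linkBilin d S (∑ i, F i) (∑ j, G j) = _
  simp only [map_sum, LinearMap.sum_apply, Fintype.sum_prod_type]
  exact Finset.sum_comm

end LinkBilinear

section PureTensor

variable (d : ι → ℕ) (S : Finset ι)

lemma ptranspose_pureTensor (M : ∀ s, Matrix (Fin (d s)) (Fin (d s)) ℂ) :
    ptranspose d S (pureTensor d M) = pureTensor d (fun s => if s ∈ S then (M s)ᵀ else M s) := by
  ext x y
  refine Finset.prod_congr rfl fun s _ => ?_
  by_cases hs : s ∈ S <;> simp [hs]

lemma pureTensor_mul (M N : ∀ s, Matrix (Fin (d s)) (Fin (d s)) ℂ) :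
    pureTensor d M * pureTensor d N = pureTensor d (fun s => M s * N s) := by
  ext x y
  simp only [mul_apply, pureTensor, ← Finset.prod_mul_distrib]
  exact (Fintype.prod_sum fun s j => M s (x s) j * N s j (y s)).symm

lemma pureTensor_ite_one_apply (M : ∀ s, Matrix (Fin (d s)) (Fin (d s)) ℂ) (x y : JIdx d) :
    pureTensor d (fun s => if s ∈ S then 1 else M s) x y =
      (if ∀ s ∈ S, x s = y s then 1 else 0) * ∏ s ∈ Sᶜ, M s (x s) (y s) := by
  rw [pureTensor, ← Finset.prod_mul_prod_compl S]
  congr 1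
  · rw [Finset.prod_congr rfl (g := fun s => if x s = y s then (1 : ℂ) else 0)
      fun s hs => by simp [hs, one_apply], Finset.prod_boole]
    congr!
  · exact Finset.prod_congr rfl fun s hs => by rw [if_neg (Finset.mem_compl.mp hs)]

lemma sum_pureTensor_override (M : ∀ s, Matrix (Fin (d s)) (Fin (d s)) ℂ) (x y : JIdx d) :
    ∑ z : ∀ s : S, Fin (d s), pureTensor d M (override d S x z) (override d S y z) =
      (∏ s ∈ S, (M s).trace) * ∏ s ∈ Sᶜ, M s (x s) (y s) := by
  have hsplit : ∀ z : ∀ s : S, Fin (d s),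
      pureTensor d M (override d S x z) (override d S y z) =
        (∏ s : S, M s (z s) (z s)) * ∏ s ∈ Sᶜ, M s (x s) (y s) := fun z => by
    rw [pureTensor, ← Finset.prod_mul_prod_compl S]
    congr 1
    · rw [← Finset.prod_coe_sort S]
      exact Fintype.prod_congr _ _ fun s => by simp only [override, dif_pos s.2]
    · exact Finset.prod_congr rfl fun s hs => by
        simp only [override, dif_neg (Finset.mem_compl.mp hs)]
  simp only [hsplit, ← Finset.sum_mul, ← Fintype.prod_sum fun (s : S) (j : Fin (d s)) => M s j j]
  rw [← Finset.prod_coe_sort S fun s => (M s).trace]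
  rfl

lemma link_pureTensor (M N : ∀ s, Matrix (Fin (d s)) (Fin (d s)) ℂ) :
    link d S (pureTensor d M) (pureTensor d N) =
      (∏ s ∈ S, ((d s : ℂ)⁻¹ * ((M s)ᵀ * N s).trace)) •
        pureTensor d (fun s => if s ∈ S then 1 else M s * N s) := by
  have hS : ∏ s ∈ S, ((if s ∈ S then (M s)ᵀ else M s) * N s).trace =
      ∏ s ∈ S, ((M s)ᵀ * N s).trace :=
    Finset.prod_congr rfl fun s hs => by rw [if_pos hs]
  have hSc : ∀ x y : JIdx d, ∏ s ∈ Sᶜ, ((if s ∈ S then (M s)ᵀ else M s) * N s) (x s) (y s) =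
      ∏ s ∈ Sᶜ, (M s * N s) (x s) (y s) := fun x y =>
    Finset.prod_congr rfl fun s hs => by rw [if_neg (Finset.mem_compl.mp hs)]
  ext x y
  rw [link, ptranspose_pureTensor, pureTensor_mul, sum_pureTensor_override, hS, hSc,
    Matrix.smul_apply, pureTensor_ite_one_apply, Finset.prod_mul_distrib, Finset.prod_inv_distrib,
    smul_eq_mul]
  ring

end PureTensor

section TypeSubspace

variable {d : ι → ℕ} {S : Finset ι} {a b : ι → Bool} {x y : MOp d}

lemma link_mem_of_mem_Lstr {p : Submodule ℝ (MOp d)}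
    (h : ∀ M N : ∀ s, Matrix (Fin (d s)) (Fin (d s)) ℂ, (∀ s, IsFactorOfType (a s) (M s)) →
      (∀ s, IsFactorOfType (b s) (N s)) → link d S (pureTensor d M) (pureTensor d N) ∈ p)
    (hx : x ∈ Lstr d a) (hy : y ∈ Lstr d b) : link d S x y ∈ p := by
  refine Submodule.apply_mem_of_mem_span₂ ((linkBilin d S).restrictScalars₁₂ ℝ ℝ) ?_ hx hy
  rintro _ ⟨M, hM, rfl⟩ _ ⟨N, hN, rfl⟩
  exact h M N hM hN

lemma link_eq_zero_of_ne {s : ι} (hs : s ∈ S) (hab : a s ≠ b s) (hx : x ∈ Lstr d a)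
    (hy : y ∈ Lstr d b) : link d S x y = 0 := by
  rw [← Submodule.mem_bot ℝ]
  refine link_mem_of_mem_Lstr (fun M N hM hN => ?_) hx hy
  rw [Submodule.mem_bot, link_pureTensor]
  refine smul_eq_zero_of_left (Finset.prod_eq_zero hs ?_) _
  rw [(hM s).trace_transpose_mul_eq_zero (hN s) hab, mul_zero]

lemma link_mem_Lstr_xor (hsupp : ∀ s, a s = true → b s = true → s ∈ S)
    (hS : ∀ s ∈ S, a s = b s) (hx : x ∈ Lstr d a) (hy : y ∈ Lstr d b) :
    link d S x y ∈ Lstr d (fun s => xor (a s) (b s)) := by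
  refine link_mem_of_mem_Lstr (fun M N hM hN => ?_) hx hy
  obtain ⟨r, hr⟩ := exists_prod_trace_transpose_mul_eq_ofReal S (fun s => (d s : ℝ)⁻¹)
    (fun s => (hM s).isHermitian) (fun s => (hN s).isHermitian)
  push_cast at hr
  rw [link_pureTensor, hr, Complex.coe_smul]
  refine Submodule.smul_mem _ _ (Submodule.subset_span ⟨_, fun s => (?_ : IsFactorOfType _ _), rfl⟩)
  by_cases hs : s ∈ S
  · simpa [hs, hS s hs] using IsFactorOfType.one
  · simpa [hs] using (hM s).mul (hN s) fun h => hs (hsupp s h.1 h.2)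

end TypeSubspace

section TypeElement

variable {κ : Type}

def ctstr (t : CTElem κ) : κ → Bool := t.getD fun _ => false

lemma ctstr_ctadd (t t' : CTElem κ) :
    ctstr (ctadd t t') = fun s => xor (ctstr t s) (ctstr t' s) := by
  cases t <;> cases t' <;> funext s <;> simp [ctstr, ctadd]

lemma ctadd_eq_none_iff {t t' : CTElem κ} : ctadd t t' = none ↔ t = none ∧ t' = none := by
  cases t <;> cases t' <;> simp [ctadd]

lemma restrTrivial_iff {S : Finset κ} {t : CTElem κ} :
    restrTrivial S t ↔ ∀ s ∈ S, ctstr t s = false := by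
  cases t <;> simp [restrTrivial, ctstr]

lemma mem_suppSet_of_ctstr {A : Set (CTElem κ)} {t : CTElem κ} {s : κ} (ht : t ∈ A)
    (hs : ctstr t s = true) : s ∈ suppSet A := by
  cases t with
  | none => simp [ctstr] at hs
  | some a => exact Set.mem_biUnion ht hs

lemma pureTensor_one [Fintype κ] (d : κ → ℕ) : pureTensor d (fun _ => 1) = 1 := by
  ext x y
  simp [pureTensor, one_apply, Finset.prod_boole, funext_iff]

lemma sum_mem_Lel [Fintype κ] {d : κ → ℕ} {t : CTElem κ} {α : Type*} {s : Finset α}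
    {F : α → MOp d} (hF : ∀ i ∈ s, F i ∈ Lel d t) (hs : t = none → s.card ≤ 1) :
    ∑ i ∈ s, F i ∈ Lel d t := by
  cases t with
  | none =>
    obtain h | ⟨i, rfl⟩ := Nat.le_one_iff_eq_zero_or_eq_one.1 (hs rfl) |>.imp
      Finset.card_eq_zero.1 Finset.card_eq_one.1
    · simp [h, Lel]
    · simpa using hF i (Finset.mem_singleton_self i)
  | some a => exact Submodule.sum_mem _ hF

lemma Lel_subset_Lstr [Fintype κ] {d : κ → ℕ} (t : CTElem κ) : Lel d t ⊆ Lstr d (ctstr t) := by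
  cases t with
  | none =>
    rintro _ (rfl | rfl)
    · exact zero_mem _
    · rw [← pureTensor_one]
      exact Submodule.subset_span ⟨_, fun s => IsFactorOfType.one, rfl⟩
  | some a => exact subset_rfl

end TypeElement

section CorrelationType

variable {d : ι → ℕ} {S : Finset ι}

variable (d S) in
lemma link_one_one : link d S (1 : MOp d) 1 = 1 := by
  by_cases hd : ∀ s ∈ S, d s ≠ 0
  · rw [← pureTensor_one, link_pureTensor, Finset.prod_eq_one fun s hs => ?_, one_smul]
    · congr 1
      funext s
      split_ifs <;> simp
    · simp [Nat.cast_ne_zero.2 (hd s hs)]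
  · obtain ⟨s, -, hs⟩ : ∃ s ∈ S, d s = 0 := by simpa using hd
    ext i
    exact (Fin.cast hs (i s)).elim0

variable {x y : MOp d} {t t' : CTElem ι}

lemma link_eq_zero_of_not_restrTrivial (hx : x ∈ Lel d t) (hy : y ∈ Lel d t')
    (h : ¬restrTrivial S (ctadd t t')) : link d S x y = 0 := by
  simp only [restrTrivial_iff, ctstr_ctadd, not_forall, Bool.not_eq_false] at h
  obtain ⟨s, hs, hxor⟩ := h
  refine link_eq_zero_of_ne hs (fun heq => ?_) (Lel_subset_Lstr t hx) (Lel_subset_Lstr t' hy)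
  simp [heq] at hxor

lemma link_mem_Lel (hx : x ∈ Lel d t) (hy : y ∈ Lel d t')
    (hsupp : ∀ s, ctstr t s = true → ctstr t' s = true → s ∈ S)
    (htriv : restrTrivial S (ctadd t t')) : link d S x y ∈ Lel d (ctadd t t') := by
  cases hc : ctadd t t' with
  | none =>
    obtain ⟨rfl, rfl⟩ := ctadd_eq_none_iff.1 hc
    rcases hx with rfl | rfl
    · simp [link_zero_left, Lel]
    rcases hy with rfl | rfl
    · simp [link_zero_right, Lel]
    · simp [link_one_one, Lel]
  | some c =>
    have hstr : c = fun s => xor (ctstr t s) (ctstr t' s) := by rw [← ctstr_ctadd, hc]; rfl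
    rw [restrTrivial_iff, ctstr_ctadd] at htriv
    subst hstr
    refine link_mem_Lstr_xor hsupp (fun s hs => ?_) (Lel_subset_Lstr t hx) (Lel_subset_Lstr t' hy)
    simpa using htriv s hs

end CorrelationType

/-- Theorem 1: composing operators of correlation types `A` and `B`
on systems `S ⊇ S_A ∩ S_B` with the link product yields an operator of type
`A * B = {a + b : a ∈ A, b ∈ B, (a+b)|_S ∈ {u,û}}`, i.e. `L_A * L_B ⊆ L_{A*B}`. -/
theorem link_type_subset (d : ι → ℕ) (S : Finset ι) (A B : Set (CTElem ι))
    (hS : suppSet A ∩ suppSet B ⊆ (S : Set ι)) :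
    ∀ MA ∈ LA d A, ∀ MB ∈ LA d B, link d S MA MB ∈ LA d (ctstar S A B) := by
  classical
  rintro _ ⟨f, hf, hfA, rfl⟩ _ ⟨g, hg, hgB, rfl⟩
  -- Group the terms `link (f t) (g t')` by `t + t'`; only those with `t ∈ A`, `t' ∈ B` and
  -- `t + t'` trivial on `S` are nonzero.
  set P : CTElem ι × CTElem ι → Prop := fun p => p.1 ∈ A ∧ p.2 ∈ B ∧ restrTrivial S (ctadd p.1 p.2)
  have hnonzero : ∀ p, link d S (f p.1) (g p.2) ≠ 0 → P p := fun p hne => by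
    refine ⟨by_contra fun h => hne ?_, by_contra fun h => hne ?_, by_contra fun h => hne ?_⟩
    · rw [hfA _ h, link_zero_left]
    · rw [hgB _ h, link_zero_right]
    · exact link_eq_zero_of_not_restrTrivial (hf _) (hg _) h
  refine ⟨fun c => ∑ p with P p ∧ ctadd p.1 p.2 = c, link d S (f p.1) (g p.2), fun c => ?_,
    fun c hc => Finset.sum_eq_zero fun p hp => ?_, ?_⟩
  · refine sum_mem_Lel (fun p hp => ?_) fun hc => ?_
    · obtain ⟨⟨hA, hB, htriv⟩, rfl⟩ := (Finset.mem_filter.1 hp).2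
      exact link_mem_Lel (hf _) (hg _)
        (fun s h h' => hS ⟨mem_suppSet_of_ctstr hA h, mem_suppSet_of_ctstr hB h'⟩) htriv
    · refine (Finset.card_le_card fun p hp => ?_).trans (Finset.card_singleton (none, none)).le
      obtain ⟨h1, h2⟩ := ctadd_eq_none_iff.1 ((Finset.mem_filter.1 hp).2.2.trans hc)
      exact Finset.mem_singleton.2 (Prod.ext h1 h2)
  · obtain ⟨⟨hA, hB, htriv⟩, rfl⟩ := (Finset.mem_filter.1 hp).2
    exact absurd ⟨p.1, hA, p.2, hB, htriv, rfl⟩ hc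
  · simp only [← Finset.filter_filter]
    rw [link_sum_sum, Finset.sum_fiberwise, Finset.sum_filter_of_ne fun p _ => hnonzero p]
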